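/- Let R be a commutative ring and x ∈ R. If there exist g ≥ 2 and y ∈ R with x = x^g · y, then there exists an idempotent e ∈ R such that e · x = x, x is invertible in the ideal e·R regarded as a ring with identity e (i.e., there exists z ∈ e·R with x·z = e), and (1 - e)·x = 0. -/
import Mathlib

/-- If `x = x^g * y` for some `g ≥ 2`, then there is an idempotent `e` with
`e*x = x`, `x` invertible in the ring `eR` with identity `e`, and `(1-e)*x = 0`. -/
theorem stmt_0 {R : Type*} [CommRing R] (x : R)
    (h : ∃ g : ℕ, 2 ≤ g ∧ ∃ y : R, x = x ^ g * y) :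
    ∃ e : R, IsIdempotentElem e ∧ e * x = x ∧
      (∃ z : R, z = e * z ∧ x * z = e) ∧ (1 - e) * x = 0 := by
  obtain ⟨g, hg, y, hxy⟩ := h
  set w := x ^ (g - 2) * y with hw
  have hx2w : x ^ 2 * w = x := by
    rw [hw, ← mul_assoc, ← pow_add]
    have : 2 + (g - 2) = g := by omega
    rw [this, ← hxy]
  set z := w ^ 2 * x with hz
  have hx2z : x ^ 2 * z = x := by
    rw [hz]
    calc x ^ 2 * (w ^ 2 * x) = (x ^ 2 * w) * (x * w) := by ring
    _ = x * (x * w) := by rw [hx2w]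
    _ = x ^ 2 * w := by ring
    _ = x := hx2w
  have hz2x : z ^ 2 * x = z := by
    rw [hz]
    calc (w ^ 2 * x) ^ 2 * x = (x ^ 2 * w) * (x * w ^ 3) := by ring
    _ = x * (x * w ^ 3) := by rw [hx2w]
    _ = (x ^ 2 * w) * w ^ 2 := by ring
    _ = x * w ^ 2 := by rw [hx2w]
    _ = w ^ 2 * x := by ring
  refine ⟨x * z, ?_, ?_, ⟨z, ?_, rfl⟩, ?_⟩
  · show x * z * (x * z) = x * z
    calc x * z * (x * z) = x ^ 2 * z * z := by ring
    _ = x * z := by rw [hx2z]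
  · calc x * z * x = x ^ 2 * z := by ring
    _ = x := hx2z
  · calc z = z ^ 2 * x := hz2x.symm
    _ = x * z * z := by ring
  · calc (1 - x * z) * x = x - x ^ 2 * z := by ring
    _ = 0 := by rw [hx2z, sub_self]
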